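/- arXiv:1011.6616 — 6 statements merged into one kernel-verified Lean document; each statement's English description precedes it below -/
import Mathlib

section
/- Let N be a natural number and let h : ℝ → ℝ be (N+1)-times continuously differentiable, with h and each of its derivatives up to order N+1 bounded on [0, ∞). Then, as t → ∞, ∫₀^∞ e^{−zt} h(z) dz = Σ_{n=0}^{N} h⁽ⁿ⁾(0)/t^{n+1} + O(t^{−(N+2)}), i.e. the difference between the integral and the partial sum is O(t^{−(N+2)}) with respect to the filter t → ∞. -/
/-! Integrating by parts once, `∫₀^∞ e^{-zt} g = (g(0) + ∫₀^∞ e^{-zt} g')/t` for `g` bounded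
with bounded derivative on `[0, ∞)`. Iterating this `N + 1` times peels off the terms
`h⁽ⁿ⁾(0)/t^{n+1}` and leaves the remainder `t^{-(N+1)} ∫₀^∞ e^{-zt} h⁽ᴺ⁺¹⁾`, which is at most
`M/t^{N+2}` once `|h⁽ᴺ⁺¹⁾| ≤ M`, because `∫₀^∞ e^{-zt} = 1/t`. -/

open Filter Asymptotics MeasureTheory Set Real Topology

noncomputable def laplace (g : ℝ → ℝ) (t : ℝ) : ℝ :=
  ∫ z in Ioi (0 : ℝ), exp (-(z * t)) * g z

section

variable {t M : ℝ} {g : ℝ → ℝ}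

lemma integrableOn_exp_neg_mul_Ioi (ht : 0 < t) :
    IntegrableOn (fun z => exp (-(z * t))) (Ioi 0) := by
  simpa only [neg_mul, mul_comm t] using exp_neg_integrableOn_Ioi 0 ht

lemma integral_exp_neg_mul_Ioi (ht : 0 < t) : ∫ z in Ioi (0 : ℝ), exp (-(z * t)) = 1 / t := by
  have := integral_exp_mul_Ioi (neg_neg_of_pos ht) 0
  simp only [mul_zero, exp_zero, neg_mul, mul_comm t] at this
  rw [this, div_neg, neg_div, neg_neg]

lemma norm_exp_neg_mul_mul_le (hM : ∀ z, 0 ≤ z → |g z| ≤ M) {z : ℝ} (hz : 0 ≤ z) :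
    ‖exp (-(z * t)) * g z‖ ≤ M * exp (-(z * t)) := by
  rw [norm_mul, norm_of_nonneg (exp_pos _).le, mul_comm]
  exact mul_le_mul_of_nonneg_right (hM z hz) (exp_pos _).le

lemma integrableOn_exp_neg_mul_mul_Ioi (ht : 0 < t) (hg : Continuous g)
    (hM : ∀ z, 0 ≤ z → |g z| ≤ M) :
    IntegrableOn (fun z => exp (-(z * t)) * g z) (Ioi 0) := by
  have hcont : Continuous fun z => exp (-(z * t)) * g z := by fun_prop
  refine ((integrableOn_exp_neg_mul_Ioi ht).const_mul M).mono' hcont.aestronglyMeasurable ?_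
  filter_upwards [ae_restrict_mem measurableSet_Ioi] with z hz
  exact norm_exp_neg_mul_mul_le hM hz.le

lemma tendsto_exp_neg_mul_mul_atTop (ht : 0 < t) (hM : ∀ z, 0 ≤ z → |g z| ≤ M) :
    Tendsto (fun z => exp (-(z * t)) * g z) atTop (𝓝 0) := by
  have hexp : Tendsto (fun z => exp (-(z * t))) atTop (𝓝 0) :=
    tendsto_exp_neg_atTop_nhds_zero.comp (tendsto_id.atTop_mul_const ht)
  refine squeeze_zero_norm' ?_ (by simpa using hexp.const_mul M)
  filter_upwards [eventually_ge_atTop 0] with z hz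
  exact norm_exp_neg_mul_mul_le hM hz

lemma abs_laplace_le (ht : 0 < t) (hM : ∀ z, 0 ≤ z → |g z| ≤ M) : |laplace g t| ≤ M / t := by
  calc |laplace g t| ≤ ∫ z in Ioi (0 : ℝ), M * exp (-(z * t)) :=
        norm_integral_le_of_norm_le ((integrableOn_exp_neg_mul_Ioi ht).const_mul M)
          (by filter_upwards [ae_restrict_mem measurableSet_Ioi] with z hz
              exact norm_exp_neg_mul_mul_le hM hz.le)
    _ = M / t := by rw [integral_const_mul, integral_exp_neg_mul_Ioi ht, mul_one_div]

lemma laplace_eq_add_laplace_deriv_div (ht : 0 < t) (hg : Differentiable ℝ g)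
    (hg' : Continuous (deriv g)) {M' : ℝ} (hM : ∀ z, 0 ≤ z → |g z| ≤ M)
    (hM' : ∀ z, 0 ≤ z → |deriv g z| ≤ M') :
    laplace g t = (g 0 + laplace (deriv g) t) / t := by
  have hexp (z : ℝ) : HasDerivAt (fun z => exp (-(z * t))) (-t * exp (-(z * t))) z := by
    simpa [mul_comm] using ((hasDerivAt_id z).mul_const t).neg.exp
  have hzero : Tendsto (fun z => exp (-(z * t)) * g z) (𝓝[>] 0) (𝓝 (g 0)) := by
    have hcont : Continuous fun z => exp (-(z * t)) * g z := by
      have := hg.continuous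
      fun_prop
    simpa using (hcont.tendsto 0).mono_left nhdsWithin_le_nhds
  have hint : IntegrableOn ((fun z => -t * exp (-(z * t))) * g) (Ioi 0) := by
    simp only [Pi.mul_def, mul_assoc]
    exact (integrableOn_exp_neg_mul_mul_Ioi ht hg.continuous hM).const_mul (-t)
  have hibp := integral_Ioi_mul_deriv_eq_deriv_mul (fun z _ => hexp z)
    (fun z _ => (hg z).hasDerivAt) (integrableOn_exp_neg_mul_mul_Ioi ht hg' hM') hint hzero
    (tendsto_exp_neg_mul_mul_atTop ht hM)
  simp only [mul_assoc, integral_const_mul] at hibp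
  rw [eq_div_iff ht.ne', laplace, laplace, hibp]
  ring

lemma laplace_eq_sum_add_laplace_iteratedDeriv_div {n k : ℕ} {h : ℝ → ℝ}
    (hh : ContDiff ℝ n h)
    (hbd : ∀ k ≤ n, ∃ M : ℝ, ∀ z : ℝ, 0 ≤ z → |iteratedDeriv k h z| ≤ M) (ht : 0 < t)
    (hk : k ≤ n) :
    laplace h t = ∑ i ∈ Finset.range k, iteratedDeriv i h 0 / t ^ (i + 1)
      + laplace (iteratedDeriv k h) t / t ^ k := by
  induction k with
  | zero => simp
  | succ k ih =>
    obtain ⟨M, hM⟩ := hbd k (by omega)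
    obtain ⟨M', hM'⟩ := hbd (k + 1) hk
    have hdiff := hh.differentiable_iteratedDeriv k (by exact_mod_cast hk)
    have hcont := hh.continuous_iteratedDeriv (k + 1) (by exact_mod_cast hk)
    rw [iteratedDeriv_succ] at hM' hcont
    rw [ih (by omega), laplace_eq_add_laplace_deriv_div ht hdiff hcont hM hM',
      ← iteratedDeriv_succ, Finset.sum_range_succ]
    field_simp
    ring

end

/-- Watson-type finite-order Laplace expansion: for `h` of class `C^{N+1}` with `h` and
all derivatives up to order `N+1` bounded on `[0, ∞)`,
`∫₀^∞ e^{-zt} h(z) dz = ∑_{n=0}^{N} h⁽ⁿ⁾(0)/t^{n+1} + O(t^{-(N+2)})` as `t → ∞`. -/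
theorem laplace_expansion (N : ℕ) (h : ℝ → ℝ) (hh : ContDiff ℝ (N + 1 : ℕ) h)
    (hbd : ∀ k ≤ N + 1, ∃ M : ℝ, ∀ z : ℝ, 0 ≤ z → |iteratedDeriv k h z| ≤ M) :
    (fun t : ℝ =>
        (∫ z in Set.Ioi (0 : ℝ), Real.exp (-(z * t)) * h z) -
          ∑ n ∈ Finset.range (N + 1), iteratedDeriv n h 0 / t ^ (n + 1))
      =O[atTop] fun t : ℝ => 1 / t ^ (N + 2) := by
  obtain ⟨M, hM⟩ := hbd (N + 1) le_rfl
  refine IsBigO.of_bound M ?_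
  filter_upwards [eventually_gt_atTop 0] with t ht
  have hexpand := laplace_eq_sum_add_laplace_iteratedDeriv_div hh hbd ht le_rfl
  have hrem := abs_laplace_le ht hM
  rw [laplace] at hexpand
  rw [hexpand, add_sub_cancel_left, norm_div, norm_div, norm_one, norm_pow, norm_pow,
    norm_of_nonneg ht.le, pow_succ _ (N + 1)]
  calc ‖laplace (iteratedDeriv (N + 1) h) t‖ / t ^ (N + 1) ≤ M / t / t ^ (N + 1) := by
        gcongr; exact hrem
    _ = M * (1 / (t ^ (N + 1) * t)) := by field_simp
end

section
/- Let N be a natural number and let g, h : ℝ → ℝ be (N+1)-times continuously differentiable, with all derivatives of g and h up to order N+1 bounded on ℝ. Then for every fixed x, y ∈ ℝ, as t → ∞, ∫₀^∞ e^{−zt} g(x+z) h(y+z) dz = Σ_{n=0}^{N} t^{−(n+1)} Σ_{k=0}^{n} C(n,k) g⁽ᵏ⁾(x) h⁽ⁿ⁻ᵏ⁾(y) + O(t^{−(N+2)}). -/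
open Filter Asymptotics
open MeasureTheory Set Real
open scoped Nat

/-! Put `F z = g (x + z) * h (y + z)`. By the Leibniz rule, `F` is `C^{N+1}` with bounded
`(N+1)`-st derivative, and its Taylor coefficients at `0` are the binomial sums of the claim.
Replacing `F` by its Taylor polynomial of degree `N` costs `O(z ^ (N + 1))` on `[0, ∞)`, and
`∫₀^∞ e^{-zt} z^m dz = m! / t^(m+1)` turns the polynomial into the claimed sum and the remainder
into `O(t^{-(N+2)})` (Watson's lemma). -/

section LaplaceMonomial

variable {t : ℝ}

lemma integrableOn_exp_neg_mul_mul_pow (ht : 0 < t) (m : ℕ) :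
    IntegrableOn (fun z : ℝ => exp (-(z * t)) * z ^ m) (Ioi 0) := by
  have hm : (-1 : ℝ) < m := by linarith [(m.cast_nonneg : (0 : ℝ) ≤ m)]
  refine (integrableOn_rpow_mul_exp_neg_mul_rpow hm one_pos ht).congr_fun (fun z _ => ?_)
    measurableSet_Ioi
  simp [mul_comm]

lemma integral_exp_neg_mul_mul_pow (ht : 0 < t) (m : ℕ) :
    ∫ z in Ioi 0, exp (-(z * t)) * z ^ m = m ! / t ^ (m + 1) := by
  have h := integral_rpow_mul_exp_neg_mul_Ioi (a := m + 1) (by positivity) ht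
  rw [add_sub_cancel_right, Gamma_nat_eq_factorial, ← Nat.cast_succ, rpow_natCast] at h
  simp only [rpow_natCast] at h
  have hfun : (fun z : ℝ => exp (-(z * t)) * z ^ m) = fun z => z ^ m * exp (-(t * z)) := by
    ext z; rw [mul_comm t, mul_comm]
  rw [hfun, h, one_div_pow, one_div_mul_eq_div]

lemma integrableOn_exp_neg_mul_mul_sum_pow (ht : 0 < t) (c : ℕ → ℝ) (N : ℕ) :
    IntegrableOn (fun z : ℝ => exp (-(z * t)) * ∑ n ∈ Finset.range N, c n * z ^ n) (Ioi 0) := by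
  simp only [Finset.mul_sum, mul_left_comm (exp _)]
  exact integrable_finsetSum _ fun n _ => (integrableOn_exp_neg_mul_mul_pow ht n).const_mul _

lemma integral_exp_neg_mul_mul_sum_pow (ht : 0 < t) (c : ℕ → ℝ) (N : ℕ) :
    ∫ z in Ioi 0, exp (-(z * t)) * ∑ n ∈ Finset.range N, c n * z ^ n
      = ∑ n ∈ Finset.range N, c n * n ! / t ^ (n + 1) := by
  simp only [Finset.mul_sum, mul_left_comm (exp _)]
  rw [integral_finsetSum _ fun n _ => (integrableOn_exp_neg_mul_mul_pow ht n).const_mul _]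
  simp only [integral_const_mul, integral_exp_neg_mul_mul_pow ht, mul_div_assoc]

end LaplaceMonomial

lemma abs_sub_taylor_le {f : ℝ → ℝ} {n : ℕ} (hf : ContDiff ℝ (n + 1 : ℕ) f) {M : ℝ}
    (hM : ∀ u, 0 ≤ u → |iteratedDeriv (n + 1) f u| ≤ M) {z : ℝ} (hz : 0 ≤ z) :
    |f z - ∑ k ∈ Finset.range (n + 1), iteratedDeriv k f 0 / k ! * z ^ k|
      ≤ M / n ! * z ^ (n + 1) := by
  -- `Icc 0 (z + 1)` rather than `Icc 0 z`, so that the interval is nondegenerate when `z = 0`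
  have hs : UniqueDiffOn ℝ (Icc 0 (z + 1)) := uniqueDiffOn_Icc (by linarith)
  have hderiv : ∀ k ≤ n + 1, ∀ u ∈ Icc 0 (z + 1),
      iteratedDerivWithin k f (Icc 0 (z + 1)) u = iteratedDeriv k f u := fun k hk u hu =>
    iteratedDerivWithin_eq_iteratedDeriv hs (hf.contDiffAt.of_le (by exact_mod_cast hk)) hu
  have htaylor : taylorWithinEval f n (Icc 0 (z + 1)) 0 z
      = ∑ k ∈ Finset.range (n + 1), iteratedDeriv k f 0 / k ! * z ^ k := by
    rw [taylor_within_apply]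
    refine Finset.sum_congr rfl fun k hk => ?_
    rw [hderiv k (by grind) 0 ⟨le_rfl, by linarith⟩, smul_eq_mul, sub_zero]
    ring
  have h := taylor_mean_remainder_bound (by linarith : (0 : ℝ) ≤ z + 1)
    (by exact_mod_cast hf.contDiffOn) ⟨hz, by linarith⟩
    (fun u hu => by rw [hderiv (n + 1) le_rfl u hu]; exact hM u hu.1)
  rwa [htaylor, Real.norm_eq_abs, sub_zero, mul_div_right_comm] at h

lemma exists_uniform_bound_of_forall_le {f : ℕ → ℝ → ℝ} {n : ℕ}
    (h : ∀ k ≤ n, ∃ M, ∀ u, |f k u| ≤ M) : ∃ M, ∀ k ≤ n, ∀ u, |f k u| ≤ M := by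
  have hev : ∀ k ∈ Finset.range (n + 1), ∀ᶠ M in atTop, ∀ u, |f k u| ≤ M := fun k hk => by
    obtain ⟨M, hM⟩ := h k (by grind)
    filter_upwards [eventually_ge_atTop M] with M' hM' u using (hM u).trans hM'
  obtain ⟨M, hM⟩ := ((eventually_all_finset _).2 hev).exists
  exact ⟨M, fun k hk => hM k (by grind)⟩

section Leibniz

variable {𝕜 𝔸 : Type*} [NontriviallyNormedField 𝕜] [NormedRing 𝔸] [NormedAlgebra 𝕜 𝔸]

lemma iteratedDeriv_mul_comp_add {n : ℕ} {f g : 𝕜 → 𝔸} (hf : ContDiff 𝕜 n f)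
    (hg : ContDiff 𝕜 n g) (x y u : 𝕜) :
    iteratedDeriv n (fun z => f (x + z) * g (y + z)) u = ∑ k ∈ Finset.range (n + 1),
      (n.choose k : 𝔸) * iteratedDeriv k f (x + u) * iteratedDeriv (n - k) g (y + u) := by
  have hf' : ContDiff 𝕜 n fun z => f (x + z) := hf.comp (contDiff_const.add contDiff_id)
  have hg' : ContDiff 𝕜 n fun z => g (y + z) := hg.comp (contDiff_const.add contDiff_id)
  rw [iteratedDeriv_fun_mul hf'.contDiffAt hg'.contDiffAt]
  simp only [iteratedDeriv_comp_const_add]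

end Leibniz

lemma abs_iteratedDeriv_mul_comp_add_le {n : ℕ} {f g : ℝ → ℝ} (hf : ContDiff ℝ n f)
    (hg : ContDiff ℝ n g) {A B : ℝ} (hA : ∀ k ≤ n, ∀ u, |iteratedDeriv k f u| ≤ A)
    (hB : ∀ k ≤ n, ∀ u, |iteratedDeriv k g u| ≤ B) (x y u : ℝ) :
    |iteratedDeriv n (fun z => f (x + z) * g (y + z)) u| ≤ 2 ^ n * (A * B) := by
  have hA0 : 0 ≤ A := (abs_nonneg _).trans (hA 0 (Nat.zero_le n) 0)
  have h2 : (2 : ℝ) ^ n = ∑ k ∈ Finset.range (n + 1), (n.choose k : ℝ) := by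
    exact_mod_cast (Nat.sum_range_choose n).symm
  rw [iteratedDeriv_mul_comp_add hf hg, h2, Finset.sum_mul]
  refine (Finset.abs_sum_le_sum_abs _ _).trans (Finset.sum_le_sum fun k hk => ?_)
  rw [abs_mul, abs_mul, Nat.abs_cast, mul_assoc]
  gcongr
  · exact hA k (by grind) _
  · exact hB (n - k) (Nat.sub_le n k) _

theorem laplace_sub_taylor_isBigO {F : ℝ → ℝ} {N : ℕ} (hF : ContDiff ℝ (N + 1 : ℕ) F) {M : ℝ}
    (hM : ∀ u, 0 ≤ u → |iteratedDeriv (N + 1) F u| ≤ M) :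
    (fun t : ℝ => (∫ z in Ioi 0, exp (-(z * t)) * F z) -
        ∑ n ∈ Finset.range (N + 1), iteratedDeriv n F 0 / t ^ (n + 1))
      =O[atTop] fun t : ℝ => 1 / t ^ (N + 2) := by
  set P : ℝ → ℝ := fun z => ∑ n ∈ Finset.range (N + 1), iteratedDeriv n F 0 / n ! * z ^ n
  refine isBigO_iff.2 ⟨M * (N + 1), ?_⟩
  filter_upwards [eventually_gt_atTop 0] with t ht
  have hPint : IntegrableOn (fun z => exp (-(z * t)) * P z) (Ioi 0) :=
    integrableOn_exp_neg_mul_mul_sum_pow ht _ _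
  have hPval : ∫ z in Ioi 0, exp (-(z * t)) * P z
      = ∑ n ∈ Finset.range (N + 1), iteratedDeriv n F 0 / t ^ (n + 1) := by
    rw [integral_exp_neg_mul_mul_sum_pow ht]
    refine Finset.sum_congr rfl fun n _ => ?_
    field_simp
  have hbound : ∀ z ∈ Ioi (0 : ℝ),
      ‖exp (-(z * t)) * (F z - P z)‖ ≤ M / N ! * (exp (-(z * t)) * z ^ (N + 1)) := by
    intro z hz
    rw [Real.norm_eq_abs, abs_mul, abs_of_pos (exp_pos _), mul_left_comm]
    gcongr
    exact abs_sub_taylor_le hF hM (le_of_lt hz)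
  have hbound_ae : ∀ᵐ z ∂volume.restrict (Ioi 0),
      ‖exp (-(z * t)) * (F z - P z)‖ ≤ M / N ! * (exp (-(z * t)) * z ^ (N + 1)) :=
    (ae_restrict_iff' measurableSet_Ioi).2 (Eventually.of_forall hbound)
  have hRint : IntegrableOn (fun z => exp (-(z * t)) * (F z - P z)) (Ioi 0) := by
    refine Integrable.mono' ((integrableOn_exp_neg_mul_mul_pow ht (N + 1)).const_mul _) ?_
      hbound_ae
    have hPcont : Continuous P := by fun_prop
    exact (by fun_prop : Continuous _).aestronglyMeasurable
  have hFint : IntegrableOn (fun z => exp (-(z * t)) * F z) (Ioi 0) := by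
    simpa only [mul_sub, Pi.add_def, sub_add_cancel] using hRint.add hPint
  calc ‖(∫ z in Ioi 0, exp (-(z * t)) * F z) -
          ∑ n ∈ Finset.range (N + 1), iteratedDeriv n F 0 / t ^ (n + 1)‖
      = ‖∫ z in Ioi 0, exp (-(z * t)) * (F z - P z)‖ := by
        rw [← hPval, ← integral_sub hFint hPint]
        simp only [mul_sub]
    _ ≤ ∫ z in Ioi 0, M / N ! * (exp (-(z * t)) * z ^ (N + 1)) :=
        norm_integral_le_of_norm_le ((integrableOn_exp_neg_mul_mul_pow ht (N + 1)).const_mul _)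
          hbound_ae
    _ = M * (N + 1) * ‖1 / t ^ (N + 2)‖ := by
        rw [integral_const_mul, integral_exp_neg_mul_mul_pow ht, Real.norm_of_nonneg (by positivity),
          Nat.factorial_succ, Nat.cast_mul]
        field_simp
        push_cast
        ring

/-- Expansion of the upper-right entry of the extended Airy kernel: for `g, h` of class
`C^{N+1}` with all derivatives up to order `N+1` bounded on `ℝ`, and fixed `x, y`,
`∫₀^∞ e^{-zt} g(x+z) h(y+z) dz
  = ∑_{n=0}^{N} t^{-(n+1)} ∑_{k=0}^{n} C(n,k) g⁽ᵏ⁾(x) h⁽ⁿ⁻ᵏ⁾(y) + O(t^{-(N+2)})`. -/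
theorem extended_kernel_upper_right_expansion (N : ℕ) (g h : ℝ → ℝ)
    (hg : ContDiff ℝ (N + 1 : ℕ) g) (hh : ContDiff ℝ (N + 1 : ℕ) h)
    (hgbd : ∀ k ≤ N + 1, ∃ M : ℝ, ∀ u : ℝ, |iteratedDeriv k g u| ≤ M)
    (hhbd : ∀ k ≤ N + 1, ∃ M : ℝ, ∀ u : ℝ, |iteratedDeriv k h u| ≤ M)
    (x y : ℝ) :
    (fun t : ℝ =>
        (∫ z in Set.Ioi (0 : ℝ), Real.exp (-(z * t)) * (g (x + z) * h (y + z))) -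
          ∑ n ∈ Finset.range (N + 1), (1 / t ^ (n + 1)) *
            ∑ k ∈ Finset.range (n + 1),
              (n.choose k : ℝ) * iteratedDeriv k g x * iteratedDeriv (n - k) h y)
      =O[atTop] fun t : ℝ => 1 / t ^ (N + 2) := by
  obtain ⟨A, hA⟩ := exists_uniform_bound_of_forall_le hgbd
  obtain ⟨B, hB⟩ := exists_uniform_bound_of_forall_le hhbd
  have hF : ContDiff ℝ (N + 1 : ℕ) fun z => g (x + z) * h (y + z) :=
    (hg.comp (contDiff_const.add contDiff_id)).mul (hh.comp (contDiff_const.add contDiff_id))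
  have hcoeff : ∀ n ≤ N, iteratedDeriv n (fun z => g (x + z) * h (y + z)) 0 =
      ∑ k ∈ Finset.range (n + 1),
        (n.choose k : ℝ) * iteratedDeriv k g x * iteratedDeriv (n - k) h y := fun n hn => by
    have hn' : (n : WithTop ℕ∞) ≤ (N + 1 : ℕ) := by exact_mod_cast (by omega : n ≤ N + 1)
    simpa only [add_zero] using iteratedDeriv_mul_comp_add (hg.of_le hn') (hh.of_le hn') x y 0
  convert laplace_sub_taylor_isBigO hF
    (fun u _ => abs_iteratedDeriv_mul_comp_add_le hg hh hA hB x y u) using 3 with t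
  refine Finset.sum_congr rfl fun n hn => ?_
  rw [hcoeff n (by grind), one_div_mul_eq_div]
end

section
/- Let N be a natural number and let g, h : ℝ → ℝ be (N+1)-times continuously differentiable, and suppose there exist constants C > 0 and m ∈ ℕ such that |g⁽ᵏ⁾(u)| ≤ C(1+|u|)^m and |h⁽ᵏ⁾(u)| ≤ C(1+|u|)^m for all u ∈ ℝ and all k ≤ N+1. Then for every fixed x, y ∈ ℝ, as t → ∞, ∫_{−∞}^0 e^{zt} g(x+z) h(y+z) dz = Σ_{n=0}^{N} (−1)^n t^{−(n+1)} Σ_{k=0}^{n} C(n,k) g⁽ᵏ⁾(x) h⁽ⁿ⁻ᵏ⁾(y) + O(t^{−(N+2)}). -/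
/-!
With `F z = g (x + z) * h (y + z)`, integrating by parts `N + 1` times against `e^{zt}` on
`(-∞, 0]` gives
`∫ e^{zt} F = ∑_{n ≤ N} (-1)^n t^{-(n+1)} F⁽ⁿ⁾(0) + (-1)^{N+1} t^{-(N+1)} ∫ e^{zt} F⁽ᴺ⁺¹⁾(z) dz`,
the boundary terms at `-∞` vanishing because the derivatives of `F` grow only polynomially.
Leibniz' rule turns `F⁽ⁿ⁾(0)` into the inner binomial sum, and the last integral is `O(1/t)`
because `e^{zt} (1 + |z|)^M ≤ A e^{tz/2}` on `z ≤ 0` once `t ≥ 1`.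
-/

open Filter Asymptotics MeasureTheory Set Real Topology

lemma one_add_abs_add_le_mul (a b : ℝ) : 1 + |a + b| ≤ (1 + |a|) * (1 + |b|) := by
  nlinarith [abs_add_le a b, abs_nonneg a, abs_nonneg b, mul_nonneg (abs_nonneg a) (abs_nonneg b)]

lemma one_add_pow_le_mul_exp (M : ℕ) {s : ℝ} (hs : -1 ≤ s) :
    (1 + s) ^ M ≤ 2 ^ M * M.factorial * exp ((1 + s) / 2) := by
  have h := pow_div_factorial_le_exp (x := (1 + s) / 2) (by linarith) M
  rw [div_pow, div_div, div_le_iff₀ (by positivity)] at h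
  linarith

lemma exp_mul_mul_one_add_abs_pow_le (M : ℕ) {t z : ℝ} (ht : 1 ≤ t) (hz : z ≤ 0) :
    exp (z * t) * (1 + |z|) ^ M ≤ 2 ^ M * M.factorial * exp (1 / 2) * exp (t / 2 * z) := by
  have hexp : exp (z * t) * exp ((1 + -z) / 2) = exp (1 / 2) * exp (z * t - z / 2) := by
    rw [← exp_add, ← exp_add]; ring_nf
  rw [abs_of_nonpos hz]
  calc exp (z * t) * (1 + -z) ^ M
      ≤ exp (z * t) * (2 ^ M * M.factorial * exp ((1 + -z) / 2)) := by
        gcongr; exact one_add_pow_le_mul_exp M (by linarith)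
    _ = 2 ^ M * M.factorial * exp (1 / 2) * exp (z * t - z / 2) := by
        rw [mul_left_comm, hexp]; ring
    _ ≤ 2 ^ M * M.factorial * exp (1 / 2) * exp (t / 2 * z) := by
        gcongr; nlinarith

section PolynomialGrowth

variable {ψ : ℝ → ℝ} {D : ℝ} {M : ℕ} (hψ : ∀ z, |ψ z| ≤ D * (1 + |z|) ^ M) {t : ℝ}
include hψ

lemma abs_exp_mul_mul_le (ht : 1 ≤ t) {z : ℝ} (hz : z ≤ 0) :
    |exp (z * t) * ψ z| ≤ D * (2 ^ M * M.factorial * exp (1 / 2)) * exp (t / 2 * z) := by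
  have hD : 0 ≤ D := by simpa using (abs_nonneg (ψ 0)).trans (hψ 0)
  calc |exp (z * t) * ψ z| ≤ exp (z * t) * (D * (1 + |z|) ^ M) := by
        rw [abs_mul, abs_of_pos (exp_pos _)]; gcongr; exact hψ z
    _ = D * (exp (z * t) * (1 + |z|) ^ M) := by ring
    _ ≤ D * (2 ^ M * M.factorial * exp (1 / 2) * exp (t / 2 * z)) :=
        mul_le_mul_of_nonneg_left (exp_mul_mul_one_add_abs_pow_le M ht hz) hD
    _ = _ := by ring

lemma integrableOn_exp_mul_mul_Iic (hc : Continuous ψ) (ht : 1 ≤ t) :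
    IntegrableOn (fun z => exp (z * t) * ψ z) (Iic 0) := by
  have ht2 : 0 < t / 2 := by linarith
  refine Integrable.mono'
    ((integrableOn_exp_mul_Iic ht2 0).const_mul (D * (2 ^ M * M.factorial * exp (1 / 2))))
    (by fun_prop : Continuous fun z => exp (z * t) * ψ z).aestronglyMeasurable ?_
  filter_upwards [ae_restrict_mem measurableSet_Iic] with z hz
  exact abs_exp_mul_mul_le hψ ht hz

lemma abs_integral_exp_mul_mul_Iic_le (ht : 1 ≤ t) :
    |∫ z in Iic 0, exp (z * t) * ψ z| ≤ 2 * D * (2 ^ M * M.factorial * exp (1 / 2)) / t := by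
  have ht2 : 0 < t / 2 := by linarith
  have hbound := norm_integral_le_of_norm_le (f := fun z => exp (z * t) * ψ z)
    ((integrableOn_exp_mul_Iic ht2 0).const_mul (D * (2 ^ M * M.factorial * exp (1 / 2)))) <| by
    filter_upwards [ae_restrict_mem measurableSet_Iic] with z hz
    exact abs_exp_mul_mul_le hψ ht hz
  rw [integral_const_mul, integral_exp_mul_Iic ht2, mul_zero, exp_zero] at hbound
  refine hbound.trans_eq ?_
  field_simp

lemma tendsto_exp_mul_mul_atBot (ht : 1 ≤ t) :
    Tendsto (fun z => exp (z * t) * ψ z) atBot (𝓝 0) := by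
  have ht2 : 0 < t / 2 := by linarith
  have hdecay := (tendsto_exp_atBot.comp (tendsto_id.const_mul_atBot ht2)).const_mul
    (D * (2 ^ M * M.factorial * exp (1 / 2)))
  rw [mul_zero] at hdecay
  refine squeeze_zero_norm' ?_ hdecay
  filter_upwards [eventually_le_atBot 0] with z hz
  exact abs_exp_mul_mul_le hψ ht hz

end PolynomialGrowth

lemma integral_exp_mul_mul_Iic_eq {φ : ℝ → ℝ} (hφ : Differentiable ℝ φ)
    (hφ' : Continuous (deriv φ)) {D : ℝ} {M : ℕ} (h0 : ∀ z, |φ z| ≤ D * (1 + |z|) ^ M)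
    (h1 : ∀ z, |deriv φ z| ≤ D * (1 + |z|) ^ M) {t : ℝ} (ht : 1 ≤ t) :
    ∫ z in Iic 0, exp (z * t) * φ z
      = (φ 0 - ∫ z in Iic 0, exp (z * t) * deriv φ z) / t := by
  have ht0 : t ≠ 0 := by positivity
  have hexp (z : ℝ) : HasDerivAt (fun z => exp (z * t) / t) (exp (z * t)) z := by
    simpa [ht0] using ((hasDerivAt_mul_const t).exp).div_const t
  have hboundary : Continuous fun z => exp (z * t) / t * φ z := by
    have := hφ.continuous; fun_prop
  have hparts := integral_Iic_mul_deriv_eq_deriv_mul (a := 0) (a' := φ 0 / t) (b' := 0)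
    (fun z _ => hexp z) (fun z _ => (hφ z).hasDerivAt)
    (IntegrableOn.congr_fun (((integrableOn_exp_mul_mul_Iic h1 hφ' ht).div_const t))
      (fun z _ => by simp [div_mul_eq_mul_div]) measurableSet_Iic)
    (integrableOn_exp_mul_mul_Iic h0 hφ.continuous ht)
    (by simpa [Pi.mul_def, div_mul_eq_mul_div, inv_mul_eq_div]
      using (hboundary.tendsto 0).mono_left nhdsWithin_le_nhds)
    (by simpa [Pi.mul_def, div_mul_eq_mul_div]
      using (tendsto_exp_mul_mul_atBot h0 ht).div_const t)
  simp only [sub_zero, div_mul_eq_mul_div, integral_div] at hparts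
  rw [sub_div, hparts]
  ring

lemma integral_exp_mul_mul_Iic_eq_sum {F : ℝ → ℝ} {n : ℕ} (hF : ContDiff ℝ n F) {D : ℝ} {M : ℕ}
    (hb : ∀ k ≤ n, ∀ z, |iteratedDeriv k F z| ≤ D * (1 + |z|) ^ M) {t : ℝ} (ht : 1 ≤ t) :
    ∫ z in Iic 0, exp (z * t) * F z
      = ∑ j ∈ Finset.range n, (-1) ^ j / t ^ (j + 1) * iteratedDeriv j F 0
        + (-1) ^ n / t ^ n * ∫ z in Iic 0, exp (z * t) * iteratedDeriv n F z := by
  induction n with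
  | zero => simp
  | succ n ih =>
    have hderiv : ∀ z, |deriv (iteratedDeriv n F) z| ≤ D * (1 + |z|) ^ M :=
      iteratedDeriv_succ (f := F) ▸ hb (n + 1) le_rfl
    have hstep := integral_exp_mul_mul_Iic_eq
      (hF.differentiable_iteratedDeriv n (by norm_cast; omega))
      (iteratedDeriv_succ (f := F) ▸ hF.continuous_iteratedDeriv _ le_rfl)
      (hb n (by omega)) hderiv ht
    rw [ih (hF.of_le (by norm_cast; omega)) (fun k hk => hb k (by omega)), hstep,
      Finset.sum_range_succ, iteratedDeriv_succ, add_assoc]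
    congr 1
    ring

lemma abs_iteratedDeriv_mul_le {f g : ℝ → ℝ} {n : ℕ} {z A B : ℝ} (hf : ContDiffAt ℝ n f z)
    (hg : ContDiffAt ℝ n g z) (hfA : ∀ k ≤ n, |iteratedDeriv k f z| ≤ A)
    (hgB : ∀ k ≤ n, |iteratedDeriv k g z| ≤ B) :
    |iteratedDeriv n (fun z => f z * g z) z| ≤ 2 ^ n * (A * B) := by
  have hA : 0 ≤ A := (abs_nonneg _).trans (hfA 0 n.zero_le)
  rw [iteratedDeriv_fun_mul hf hg]
  calc _ ≤ ∑ i ∈ Finset.range (n + 1),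
          |(n.choose i : ℝ) * iteratedDeriv i f z * iteratedDeriv (n - i) g z| :=
        Finset.abs_sum_le_sum_abs _ _
    _ ≤ ∑ i ∈ Finset.range (n + 1), (n.choose i : ℝ) * (A * B) := by
        gcongr with i hi
        rw [abs_mul, abs_mul, Nat.abs_cast, mul_assoc]
        gcongr
        · exact hfA i (Finset.mem_range_succ_iff.mp hi)
        · exact hgB _ (Nat.sub_le _ _)
    _ = 2 ^ n * (A * B) := by
        rw [← Finset.sum_mul, ← Nat.cast_sum, Nat.sum_range_choose]
        push_cast
        ring

lemma abs_comp_const_add_le {ψ : ℝ → ℝ} {C : ℝ} {m : ℕ} (hψ : ∀ u, |ψ u| ≤ C * (1 + |u|) ^ m)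
    (x z : ℝ) : |ψ (x + z)| ≤ C * (1 + |x|) ^ m * (1 + |z|) ^ m := by
  have hC : 0 ≤ C := by simpa using (abs_nonneg (ψ 0)).trans (hψ 0)
  calc |ψ (x + z)| ≤ C * (1 + |x + z|) ^ m := hψ _
    _ ≤ C * ((1 + |x|) * (1 + |z|)) ^ m := by gcongr; exact one_add_abs_add_le_mul x z
    _ = C * (1 + |x|) ^ m * (1 + |z|) ^ m := by rw [mul_pow, mul_assoc]

lemma ContDiff.comp_const_add {ψ : ℝ → ℝ} {n : ℕ∞} (hψ : ContDiff ℝ n ψ) (a : ℝ) :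
    ContDiff ℝ n fun z => ψ (a + z) :=
  hψ.comp (contDiff_const.add contDiff_id)

section Translates

variable {g h : ℝ → ℝ} {n : ℕ} (hg : ContDiff ℝ n g) (hh : ContDiff ℝ n h) (x y : ℝ)
include hg hh

lemma contDiff_comp_add_mul_comp_add : ContDiff ℝ n fun z => g (x + z) * h (y + z) :=
  (hg.comp_const_add x).mul (hh.comp_const_add y)

lemma iteratedDeriv_comp_add_mul_comp_add (z : ℝ) :
    iteratedDeriv n (fun z => g (x + z) * h (y + z)) z
      = ∑ k ∈ Finset.range (n + 1),
          (n.choose k : ℝ) * iteratedDeriv k g (x + z) * iteratedDeriv (n - k) h (y + z) := by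
  rw [iteratedDeriv_fun_mul (hg.comp_const_add x).contDiffAt (hh.comp_const_add y).contDiffAt]
  simp only [iteratedDeriv_comp_const_add]

lemma abs_iteratedDeriv_comp_add_mul_comp_add_le {C : ℝ} {m : ℕ}
    (hgbd : ∀ u, ∀ k ≤ n, |iteratedDeriv k g u| ≤ C * (1 + |u|) ^ m)
    (hhbd : ∀ u, ∀ k ≤ n, |iteratedDeriv k h u| ≤ C * (1 + |u|) ^ m) :
    ∀ k ≤ n, ∀ z, |iteratedDeriv k (fun z => g (x + z) * h (y + z)) z|
      ≤ 2 ^ n * C ^ 2 * ((1 + |x|) * (1 + |y|)) ^ m * (1 + |z|) ^ (2 * m) := by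
  intro k hk z
  have hC : 0 ≤ C := by simpa using (abs_nonneg _).trans (hgbd 0 0 n.zero_le)
  have hcomp {ψ : ℝ → ℝ} (hψ : ContDiff ℝ n ψ) (a : ℝ) :
      ContDiffAt ℝ k (fun z => ψ (a + z)) z :=
    (hψ.comp_const_add a).contDiffAt.of_le (by exact_mod_cast hk)
  calc _ ≤ 2 ^ k * (C * (1 + |x|) ^ m * (1 + |z|) ^ m * (C * (1 + |y|) ^ m * (1 + |z|) ^ m)) := by
        refine abs_iteratedDeriv_mul_le (hcomp hg x) (hcomp hh y) (fun j hj => ?_) (fun j hj => ?_)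
        · rw [iteratedDeriv_comp_const_add]
          exact abs_comp_const_add_le (fun u => hgbd u j (hj.trans hk)) x z
        · rw [iteratedDeriv_comp_const_add]
          exact abs_comp_const_add_le (fun u => hhbd u j (hj.trans hk)) y z
    _ ≤ 2 ^ n * (C * (1 + |x|) ^ m * (1 + |z|) ^ m * (C * (1 + |y|) ^ m * (1 + |z|) ^ m)) := by
        gcongr
        norm_num
    _ = _ := by rw [mul_pow]; ring

end Translates

theorem extended_kernel_lower_left_expansion_general (N : ℕ) (g h : ℝ → ℝ)
    (hg : ContDiff ℝ (N + 1 : ℕ) g) (hh : ContDiff ℝ (N + 1 : ℕ) h)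
    (C : ℝ) (m : ℕ)
    (hgbd : ∀ u : ℝ, ∀ k ≤ N + 1, |iteratedDeriv k g u| ≤ C * (1 + |u|) ^ m)
    (hhbd : ∀ u : ℝ, ∀ k ≤ N + 1, |iteratedDeriv k h u| ≤ C * (1 + |u|) ^ m)
    (x y : ℝ) :
    (fun t : ℝ =>
        (∫ z in Set.Iio (0 : ℝ), Real.exp (z * t) * (g (x + z) * h (y + z))) -
          ∑ n ∈ Finset.range (N + 1), ((-1 : ℝ) ^ n / t ^ (n + 1)) *
            ∑ k ∈ Finset.range (n + 1),
              (n.choose k : ℝ) * iteratedDeriv k g x * iteratedDeriv (n - k) h y)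
      =O[atTop] fun t : ℝ => 1 / t ^ (N + 2) := by
  have hFbd := abs_iteratedDeriv_comp_add_mul_comp_add_le hg hh x y hgbd hhbd
  have hF0 : ∀ n ∈ Finset.range (N + 1),
      iteratedDeriv n (fun z => g (x + z) * h (y + z)) 0 = ∑ k ∈ Finset.range (n + 1),
        (n.choose k : ℝ) * iteratedDeriv k g x * iteratedDeriv (n - k) h y := fun n hn => by
    have hn : (n : WithTop ℕ∞) ≤ (N + 1 : ℕ) := by exact_mod_cast (Finset.mem_range.mp hn).le
    simpa using iteratedDeriv_comp_add_mul_comp_add (hg.of_le hn) (hh.of_le hn) x y 0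
  refine IsBigO.of_bound (2 * (2 ^ (N + 1) * C ^ 2 * ((1 + |x|) * (1 + |y|)) ^ m) *
    (2 ^ (2 * m) * (2 * m).factorial * exp (1 / 2))) ?_
  filter_upwards [eventually_ge_atTop 1] with t ht
  have hremainder := abs_integral_exp_mul_mul_Iic_le (hFbd (N + 1) le_rfl) ht
  rw [← integral_Iic_eq_integral_Iio, integral_exp_mul_mul_Iic_eq_sum
    (contDiff_comp_add_mul_comp_add hg hh x y) hFbd ht,
    Finset.sum_congr rfl fun n hn => by rw [hF0 n hn], add_sub_cancel_left]
  have ht0 : 0 < t := by linarith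
  simp only [norm_mul, norm_div, norm_pow, norm_neg, norm_one, one_pow, Real.norm_eq_abs,
    abs_of_pos ht0]
  exact (mul_le_mul_of_nonneg_left hremainder (by positivity)).trans_eq (by ring)

/-- Expansion of the lower-left entry of the extended Airy kernel: for `g, h` of class
`C^{N+1}` with all derivatives up to order `N+1` polynomially bounded on `ℝ`, and fixed
`x, y`, `∫_{-∞}^0 e^{zt} g(x+z) h(y+z) dz
  = ∑_{n=0}^{N} (-1)^n t^{-(n+1)} ∑_{k=0}^{n} C(n,k) g⁽ᵏ⁾(x) h⁽ⁿ⁻ᵏ⁾(y) + O(t^{-(N+2)})`. -/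
theorem extended_kernel_lower_left_expansion (N : ℕ) (g h : ℝ → ℝ)
    (hg : ContDiff ℝ (N + 1 : ℕ) g) (hh : ContDiff ℝ (N + 1 : ℕ) h)
    (C : ℝ) (hC : 0 < C) (m : ℕ)
    (hgbd : ∀ u : ℝ, ∀ k ≤ N + 1, |iteratedDeriv k g u| ≤ C * (1 + |u|) ^ m)
    (hhbd : ∀ u : ℝ, ∀ k ≤ N + 1, |iteratedDeriv k h u| ≤ C * (1 + |u|) ^ m)
    (x y : ℝ) :
    (fun t : ℝ =>
        (∫ z in Set.Iio (0 : ℝ), Real.exp (z * t) * (g (x + z) * h (y + z))) -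
          ∑ n ∈ Finset.range (N + 1), ((-1 : ℝ) ^ n / t ^ (n + 1)) *
            ∑ k ∈ Finset.range (n + 1),
              (n.choose k : ℝ) * iteratedDeriv k g x * iteratedDeriv (n - k) h y)
      =O[atTop] fun t : ℝ => 1 / t ^ (N + 2) :=
  extended_kernel_lower_left_expansion_general N g h hg hh C m hgbd hhbd x y
end

section
/- Let q : ℝ → ℝ be twice continuously differentiable, satisfy the Painlevé II equation q''(s) = s·q(s) + 2·q(s)³ for all s ∈ ℝ, and satisfy the decay bound: there is a constant C with |q(s)| ≤ C·e^{−s} and |q'(s)| ≤ C·e^{−s} for all s ≥ 0. Then for every s ∈ ℝ, ∫_s^∞ q(x)² dx = q'(s)² − s·q(s)² − q(s)⁴. -/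
/-!
Along a solution of `q'' = s q + 2 q³`, the Hamiltonian `H = (q')² - s q² - q⁴` satisfies
`H' = 2 q' q'' - q² - 2 s q q' - 4 q³ q' = -q²`. The decay hypothesis makes `H` vanish at `+∞`,
so `∫_s^∞ q² = H(s)` by the fundamental theorem of calculus on a half-line (as `q² ≥ 0`,
the improper integral converges).
-/

open Filter Real Set MeasureTheory Topology

noncomputable section

def painleveIIHamiltonian (q q' : ℝ → ℝ) (t : ℝ) : ℝ :=
  q' t ^ 2 - t * q t ^ 2 - q t ^ 4

theorem hasDerivAt_painleveIIHamiltonian {q q' : ℝ → ℝ} {x : ℝ} (hq : HasDerivAt q (q' x) x)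
    (hq' : HasDerivAt q' (x * q x + 2 * q x ^ 3) x) :
    HasDerivAt (painleveIIHamiltonian q q') (-q x ^ 2) x := by
  have h := ((hq'.pow 2).sub ((hasDerivAt_id x).mul (hq.pow 2))).sub (hq.pow 4)
  exact h.congr_deriv (by simp only [Pi.pow_apply, id_eq, Nat.cast_ofNat]; ring)

theorem tendsto_pow_mul_atTop_of_abs_le_exp_neg {f : ℝ → ℝ} {C : ℝ}
    (hf : ∀ᶠ t in atTop, |f t| ≤ C * exp (-t)) (n : ℕ) :
    Tendsto (fun t => t ^ n * f t) atTop (𝓝 0) := by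
  have hbound : Tendsto (fun t : ℝ => C * (t ^ n * exp (-t))) atTop (𝓝 0) := by
    simpa using (tendsto_pow_mul_exp_neg_atTop_nhds_zero n).const_mul C
  refine squeeze_zero_norm' ?_ hbound
  filter_upwards [hf, eventually_ge_atTop 0] with t hft ht
  calc ‖t ^ n * f t‖ = t ^ n * |f t| := by
        rw [norm_mul, norm_pow, Real.norm_of_nonneg ht, Real.norm_eq_abs]
    _ ≤ t ^ n * (C * exp (-t)) := by gcongr
    _ = C * (t ^ n * exp (-t)) := by ring

theorem tendsto_painleveIIHamiltonian_atTop {q q' : ℝ → ℝ} {C : ℝ}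
    (hq : ∀ᶠ t in atTop, |q t| ≤ C * exp (-t))
    (hq' : ∀ᶠ t in atTop, |q' t| ≤ C * exp (-t)) :
    Tendsto (painleveIIHamiltonian q q') atTop (𝓝 0) := by
  have hq₀ : Tendsto q atTop (𝓝 0) := by
    simpa using tendsto_pow_mul_atTop_of_abs_le_exp_neg hq 0
  have hq'₀ : Tendsto q' atTop (𝓝 0) := by
    simpa using tendsto_pow_mul_atTop_of_abs_le_exp_neg hq' 0
  have hmid : Tendsto (fun t => t * q t ^ 2) atTop (𝓝 0) := by
    have h := (tendsto_pow_mul_atTop_of_abs_le_exp_neg hq 1).mul hq₀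
    simp only [pow_one, mul_zero] at h
    exact h.congr fun t => by ring
  unfold painleveIIHamiltonian
  simpa using ((hq'₀.pow 2).sub hmid).sub (hq₀.pow 4)

end

/-- For a Painlevé II solution `q` with exponential decay at `+∞`,
`∫_s^∞ q(x)² dx = q'(s)² - s q(s)² - q(s)⁴`. -/
theorem u00_eq (q : ℝ → ℝ) (hq : ContDiff ℝ 2 q)
    (hP2 : ∀ s : ℝ, iteratedDeriv 2 q s = s * q s + 2 * q s ^ 3)
    (C : ℝ)
    (hdecay : ∀ s : ℝ, 0 ≤ s →
      |q s| ≤ C * Real.exp (-s) ∧ |deriv q s| ≤ C * Real.exp (-s)) :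
    ∀ s : ℝ, (∫ x in Set.Ioi s, q x ^ 2) = deriv q s ^ 2 - s * q s ^ 2 - q s ^ 4 := by
  intro s
  have hderiv : ∀ x, HasDerivAt (painleveIIHamiltonian q (deriv q)) (-q x ^ 2) x := by
    intro x
    have hq' : HasDerivAt (deriv q) (x * q x + 2 * q x ^ 3) x := by
      rw [← hP2 x, iteratedDeriv_succ, iteratedDeriv_one]
      have hdiff := hq.differentiable_iteratedDeriv' 1
      rw [iteratedDeriv_one] at hdiff
      exact (hdiff x).hasDerivAt
    exact hasDerivAt_painleveIIHamiltonian ((hq.differentiable two_ne_zero x).hasDerivAt) hq'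
  have hdecay' := eventually_atTop.2 ⟨0, hdecay⟩
  have hlim : Tendsto (-painleveIIHamiltonian q (deriv q)) atTop (𝓝 0) := by
    have h := (tendsto_painleveIIHamiltonian_atTop (hdecay'.mono fun _ h => h.1)
      (hdecay'.mono fun _ h => h.2)).neg
    rwa [neg_zero] at h
  rw [integral_Ioi_of_hasDerivAt_of_nonneg' (a := s)
    (fun x _ => neg_neg (q x ^ 2) ▸ (hderiv x).neg) (fun x _ => sq_nonneg (q x)) hlim,
    zero_sub, Pi.neg_apply, neg_neg]
  rfl
end

section
/- Let q : ℝ → ℝ be twice continuously differentiable, satisfy the Painlevé II equation q''(s) = s·q(s) + 2·q(s)³ for all s ∈ ℝ, and satisfy the decay bound: there is a constant C with |q(s)| ≤ C·e^{−s} and |q'(s)| ≤ C·e^{−s} for all s ≥ 0. Define u₀₀(s) := ∫_s^∞ q(x)² dx and q₁(s) := q'(s) + u₀₀(s)·q(s). Then for every s ∈ ℝ, ∫_s^∞ q₁(x)² dx = (1/3)·u₀₀(s)³ − (q(s)² + s/3)·u₀₀(s) − (2/3)·q(s)·q'(s). -/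
/-!
For a Painlevé II solution `(q'² - x q² - q⁴)' = -q²`, and the exponential decay of `q`, `q'`
makes this energy vanish at `+∞`, so it equals `u₀₀`. Substituting this expression for `u₀₀`,
the right-hand side `F` of the identity has `F' = -q₁²`; since even `x u₀₀(x) → 0`, also
`F → 0` at `+∞`, whence `∫_s^∞ q₁² = F(s)`.
-/

open MeasureTheory Set Filter Real Asymptotics Topology

theorem integral_Ioi_eq_of_hasDerivAt_neg {F g : ℝ → ℝ} {a : ℝ}
    (hF : ∀ x ∈ Ici a, HasDerivAt F (-g x) x) (hg : IntegrableOn g (Ioi a))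
    (hF0 : Tendsto F atTop (𝓝 0)) : ∫ x in Ioi a, g x = F a := by
  have h := integral_Ioi_of_hasDerivAt_of_tendsto' hF hg.neg hF0
  rw [integral_neg] at h
  linarith

section ExpDecay

variable {f : ℝ → ℝ}

theorem isBigO_exp_neg_of_abs_le {C : ℝ} (h : ∀ x, 0 ≤ x → |f x| ≤ C * exp (-x)) :
    f =O[atTop] fun x => exp (-x) := by
  refine IsBigO.of_bound C ?_
  filter_upwards [eventually_ge_atTop 0] with x hx
  simpa only [norm_eq_abs, abs_of_pos (exp_pos _)] using h x hx

theorem tendsto_pow_mul_of_isBigO_exp_neg (hf : f =O[atTop] fun x => exp (-x)) (n : ℕ) :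
    Tendsto (fun x => x ^ n * f x) atTop (𝓝 0) :=
  ((isBigO_refl (fun x : ℝ => x ^ n) atTop).mul hf).trans_tendsto
    (tendsto_pow_mul_exp_neg_atTop_nhds_zero n)

theorem integrableOn_sq_of_isBigO_exp_neg (hf : Continuous f)
    (hO : f =O[atTop] fun x => exp (-x)) (a : ℝ) :
    IntegrableOn (fun x => f x ^ 2) (Ioi a) := by
  refine integrable_of_isBigO_exp_neg two_pos (hf.pow 2).continuousOn ?_
  refine (hO.pow 2).congr' EventuallyEq.rfl (Eventually.of_forall fun x => ?_)
  show exp (-x) ^ 2 = exp (-2 * x)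
  rw [← exp_nat_mul]
  ring_nf

end ExpDecay

namespace PainleveII

variable {q q' : ℝ → ℝ}

def energy (q q' : ℝ → ℝ) (x : ℝ) : ℝ := q' x ^ 2 - x * q x ^ 2 - q x ^ 4

theorem hasDerivAt_energy (hq : ∀ x, HasDerivAt q (q' x) x)
    (hq' : ∀ x, HasDerivAt q' (x * q x + 2 * q x ^ 3) x) (x : ℝ) :
    HasDerivAt (energy q q') (-q x ^ 2) x := by
  have h : HasDerivAt (energy q q')
      (2 * q' x ^ (2 - 1) * (x * q x + 2 * q x ^ 3)
        - (1 * q x ^ 2 + x * (2 * q x ^ (2 - 1) * q' x)) - 4 * q x ^ (4 - 1) * q' x) x :=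
    (((hq' x).pow 2).sub ((hasDerivAt_id x).mul ((hq x).pow 2))).sub ((hq x).pow 4)
  exact h.congr_deriv (by ring)

theorem tendsto_pow_mul_energy (hq : q =O[atTop] fun x => exp (-x))
    (hq' : q' =O[atTop] fun x => exp (-x)) (n : ℕ) :
    Tendsto (fun x => x ^ n * energy q q' x) atTop (𝓝 0) := by
  have hq0 : Tendsto q atTop (𝓝 0) := hq.trans_tendsto tendsto_exp_neg_atTop_nhds_zero
  have hq'0 : Tendsto q' atTop (𝓝 0) := hq'.trans_tendsto tendsto_exp_neg_atTop_nhds_zero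
  have h := ((tendsto_pow_mul_of_isBigO_exp_neg hq' n).mul hq'0).sub
    (((tendsto_pow_mul_of_isBigO_exp_neg hq (n + 1)).mul hq0).add
      ((tendsto_pow_mul_of_isBigO_exp_neg hq n).mul (hq0.pow 3)))
  simp only [mul_zero, add_zero, sub_zero, zero_pow three_ne_zero] at h
  exact h.congr fun x => by simp only [energy]; ring

theorem integral_Ioi_sq_eq_energy (hq : ∀ x, HasDerivAt q (q' x) x)
    (hq' : ∀ x, HasDerivAt q' (x * q x + 2 * q x ^ 3) x)
    (hqO : q =O[atTop] fun x => exp (-x)) (hq'O : q' =O[atTop] fun x => exp (-x)) (s : ℝ) :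
    ∫ x in Ioi s, q x ^ 2 = energy q q' s :=
  integral_Ioi_eq_of_hasDerivAt_neg (fun x _ => hasDerivAt_energy hq hq' x)
    (integrableOn_sq_of_isBigO_exp_neg (continuous_iff_continuousAt.2 fun x =>
      (hq x).continuousAt) hqO s)
    (by simpa using tendsto_pow_mul_energy hqO hq'O 0)

noncomputable def u11Rhs (q q' : ℝ → ℝ) (x : ℝ) : ℝ :=
  (1 / 3) * energy q q' x ^ 3 - (q x ^ 2 + x / 3) * energy q q' x - (2 / 3) * q x * q' x

theorem hasDerivAt_u11Rhs (hq : ∀ x, HasDerivAt q (q' x) x)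
    (hq' : ∀ x, HasDerivAt q' (x * q x + 2 * q x ^ 3) x) (x : ℝ) :
    HasDerivAt (u11Rhs q q') (-(q' x + energy q q' x * q x) ^ 2) x := by
  have hE := hasDerivAt_energy hq hq'
  have h : HasDerivAt (u11Rhs q q')
      ((1 / 3) * (3 * energy q q' x ^ (3 - 1) * (-q x ^ 2))
        - ((2 * q x ^ (2 - 1) * q' x + 1 / 3) * energy q q' x + (q x ^ 2 + x / 3) * (-q x ^ 2))
        - ((2 / 3) * q' x * q' x + (2 / 3) * q x * (x * q x + 2 * q x ^ 3))) x :=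
    ((((hE x).pow 3).const_mul _).sub ((((hq x).pow 2).add ((hasDerivAt_id x).div_const 3)).mul
      (hE x))).sub (((hq x).const_mul _).mul (hq' x))
  refine h.congr_deriv ?_
  simp only [energy]
  ring

theorem tendsto_u11Rhs (hqO : q =O[atTop] fun x => exp (-x))
    (hq'O : q' =O[atTop] fun x => exp (-x)) :
    Tendsto (u11Rhs q q') atTop (𝓝 0) := by
  have hq0 : Tendsto q atTop (𝓝 0) := hqO.trans_tendsto tendsto_exp_neg_atTop_nhds_zero
  have hq'0 : Tendsto q' atTop (𝓝 0) := hq'O.trans_tendsto tendsto_exp_neg_atTop_nhds_zero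
  have hE0 : Tendsto (energy q q') atTop (𝓝 0) := by
    simpa using tendsto_pow_mul_energy hqO hq'O 0
  have hxE0 : Tendsto (fun x => x * energy q q' x) atTop (𝓝 0) := by
    simpa using tendsto_pow_mul_energy hqO hq'O 1
  have h := (((hE0.pow 3).const_mul (1 / 3)).sub (((hq0.pow 2).mul hE0).add
    (hxE0.div_const 3))).sub ((hq0.const_mul (2 / 3)).mul hq'0)
  simp only [mul_zero, add_zero, sub_zero, zero_div, zero_pow three_ne_zero] at h
  exact h.congr fun y => by simp only [u11Rhs]; ring

theorem isBigO_add_energy_mul (hqO : q =O[atTop] fun x => exp (-x))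
    (hq'O : q' =O[atTop] fun x => exp (-x)) :
    (fun x => q' x + energy q q' x * q x) =O[atTop] fun x => exp (-x) := by
  have hE0 : Tendsto (energy q q') atTop (𝓝 0) := by
    simpa using tendsto_pow_mul_energy hqO hq'O 0
  exact hq'O.add (by simpa using (hE0.isBigO_one ℝ).mul hqO)

end PainleveII

open PainleveII

/-- The identity `u₁₁ = (1/3) u₀₀³ - (q² + s/3) u₀₀ - (2/3) q q'`, where
`u₀₀(s) = ∫_s^∞ q(x)² dx` and `q₁ = q' + u₀₀·q`, for a Painlevé II solution `q`
with exponential decay at `+∞`. -/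
theorem u11_eq (q u00 q1 : ℝ → ℝ) (hq : ContDiff ℝ 2 q)
    (hP2 : ∀ s : ℝ, iteratedDeriv 2 q s = s * q s + 2 * q s ^ 3)
    (C : ℝ)
    (hdecay : ∀ s : ℝ, 0 ≤ s →
      |q s| ≤ C * Real.exp (-s) ∧ |deriv q s| ≤ C * Real.exp (-s))
    (hu00 : ∀ s : ℝ, u00 s = ∫ x in Set.Ioi s, q x ^ 2)
    (hq1 : ∀ s : ℝ, q1 s = deriv q s + u00 s * q s) :
    ∀ s : ℝ, (∫ x in Set.Ioi s, q1 x ^ 2) =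
      (1 / 3) * u00 s ^ 3 - (q s ^ 2 + s / 3) * u00 s - (2 / 3) * q s * deriv q s := by
  have hq' : ∀ x, HasDerivAt q (deriv q x) x := fun x =>
    (hq.differentiable two_ne_zero x).hasDerivAt
  have hq'' : ∀ x, HasDerivAt (deriv q) (x * q x + 2 * q x ^ 3) x := fun x => by
    rw [← hP2, iteratedDeriv_succ, iteratedDeriv_one]
    exact (hq.differentiable_deriv_two x).hasDerivAt
  have hqO := isBigO_exp_neg_of_abs_le fun x hx => (hdecay x hx).1
  have hq'O := isBigO_exp_neg_of_abs_le fun x hx => (hdecay x hx).2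
  obtain rfl : u00 = energy q (deriv q) := funext fun s =>
    (hu00 s).trans (integral_Ioi_sq_eq_energy hq' hq'' hqO hq'O s)
  rw [funext hq1]
  have hq1_cont : Continuous fun x => deriv q x + energy q (deriv q) x * q x := by
    have := hq.continuous
    have := hq.continuous_deriv one_le_two
    unfold energy
    fun_prop
  exact fun s => integral_Ioi_eq_of_hasDerivAt_neg (fun x _ => hasDerivAt_u11Rhs hq' hq'' x)
    (integrableOn_sq_of_isBigO_exp_neg hq1_cont (isBigO_add_energy_mul hqO hq'O) s)
    (tendsto_u11Rhs hqO hq'O)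
end

section
/- Let f : ℝ → ℝ be a Schwartz function with ∫_ℝ f(s) ds = 1, and set μ_k := ∫_ℝ s^k·f(s) ds. Then ∬_{ℝ²} [ (1/3)·(3s₁ + s₂)·(3s₂ + s₁)·f(s₁)·f(s₂) + 3·(f'(s₁)·f(s₂) + f(s₁)·f'(s₂)) + (s₁ + s₂)·f'(s₁)·f'(s₂) + (1/6)·f''(s₁)·f''(s₂) ] ds₁ ds₂ = 2·μ₂ + (10/3)·μ₁². -/
/-!
Expanding `(1/3)(3s₁ + s₂)(3s₂ + s₁) = s₁² + s₂² + (10/3)s₁s₂` writes the integrand as a sum of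
eight products `a(s₁) b(s₂)`, each factor a polynomial times `f`, `f'` or `f''`. By Fubini every
term integrates to a product of one-dimensional moments, and every term containing a factor
`∫ f'` or `∫ f''` vanishes because a Schwartz function decays at `±∞`. What survives is
`μ₂ μ₀ + μ₀ μ₂ + (10/3) μ₁²` with `μ₀ = 1`.
-/

open MeasureTheory SchwartzMap

theorem MeasureTheory.integral_prod_sum_mul {ι α β 𝕜 : Type*} [RCLike 𝕜]
    [MeasurableSpace α] [MeasurableSpace β] {μ : Measure α} {ν : Measure β} [SFinite μ]
    [SFinite ν] (s : Finset ι) {A : ι → α → 𝕜} {B : ι → β → 𝕜}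
    (hA : ∀ i ∈ s, Integrable (A i) μ) (hB : ∀ i ∈ s, Integrable (B i) ν) :
    ∫ z, ∑ i ∈ s, A i z.1 * B i z.2 ∂μ.prod ν = ∑ i ∈ s, (∫ x, A i x ∂μ) * ∫ y, B i y ∂ν := by
  rw [integral_finsetSum s fun i hi => (hA i hi).mul_prod (hB i hi)]
  exact Finset.sum_congr rfl fun i _ => integral_prod_mul (A i) (B i)

namespace SchwartzMap

variable {V : Type*} [NormedAddCommGroup V] [NormedSpace ℝ V]

theorem integrable_pow_smul (f : 𝓢(ℝ, V)) (k : ℕ) : Integrable (fun x : ℝ => x ^ k • f x) := by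
  refine (f.integrable_pow_mul volume k).mono'
    ((continuous_id.pow k).smul f.continuous).aestronglyMeasurable ?_
  filter_upwards with x
  simp [norm_smul]

theorem integral_deriv_eq_zero (f : 𝓢(ℝ, V)) : ∫ x, deriv f x = 0 :=
  integral_eq_zero_of_hasDerivAt_of_integrable f.hasDerivAt (derivCLM ℝ V f).integrable
    f.integrable

end SchwartzMap

/-- The covariance coefficient `C₆ = 2μ₂ + (10/3)μ₁²`: for any Schwartz probability
density `f`, the double integral of the sixth-order coefficient `c₆` equals
`2μ₂ + (10/3)μ₁²`, where `μ_k = ∫ s^k f(s) ds`. -/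
theorem C6_eq (f : SchwartzMap ℝ ℝ) (hf : (∫ s : ℝ, f s) = 1) :
    (∫ p : ℝ × ℝ,
        ((1 / 3) * (3 * p.1 + p.2) * (3 * p.2 + p.1) * f p.1 * f p.2 +
          3 * (deriv f p.1 * f p.2 + f p.1 * deriv f p.2) +
          (p.1 + p.2) * deriv f p.1 * deriv f p.2 +
          (1 / 6) * iteratedDeriv 2 f p.1 * iteratedDeriv 2 f p.2)) =
      2 * (∫ s : ℝ, s ^ 2 * f s) + (10 / 3) * (∫ s : ℝ, s * f s) ^ 2 := by
  set f' := derivCLM ℝ ℝ f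
  set f'' := derivCLM ℝ ℝ f'
  have hf' : ∫ s, f' s = 0 := integral_deriv_eq_zero f
  have hf'' : ∫ s, f'' s = 0 := integral_deriv_eq_zero f'
  have hderiv2 (s : ℝ) : iteratedDeriv 2 f s = f'' s := by
    rw [iteratedDeriv_succ, iteratedDeriv_one]; rfl
  let c : Fin 8 → ℝ := ![1, 1, 10 / 3, 3, 3, 1, 1, 1 / 6]
  let j : Fin 8 → ℕ := ![2, 0, 1, 0, 0, 1, 0, 0]
  let k : Fin 8 → ℕ := ![0, 2, 1, 0, 0, 0, 1, 0]
  let u : Fin 8 → 𝓢(ℝ, ℝ) := ![f, f, f, f', f, f', f', f'']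
  let v : Fin 8 → 𝓢(ℝ, ℝ) := ![f, f, f, f, f', f', f', f'']
  have hsplit : ∀ p : ℝ × ℝ,
      (1 / 3) * (3 * p.1 + p.2) * (3 * p.2 + p.1) * f p.1 * f p.2 +
          3 * (deriv f p.1 * f p.2 + f p.1 * deriv f p.2) +
          (p.1 + p.2) * deriv f p.1 * deriv f p.2 +
          (1 / 6) * iteratedDeriv 2 f p.1 * iteratedDeriv 2 f p.2 =
        ∑ i, c i * (p.1 ^ j i * u i p.1) * (p.2 ^ k i * v i p.2) := by
    intro p
    simp only [Fin.sum_univ_eight, c, j, k, u, v, Matrix.cons_val, pow_zero, pow_one, one_mul,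
      hderiv2, f', derivCLM_apply]
    ring
  simp_rw [hsplit, Measure.volume_eq_prod]
  rw [integral_prod_sum_mul (A := fun i x => c i * (x ^ j i * u i x))
    (B := fun i y => y ^ k i * v i y) _
    (fun i _ => (integrable_pow_smul (u i) (j i)).const_mul (c i))
    (fun i _ => integrable_pow_smul (v i) (k i))]
  simp only [Fin.sum_univ_eight, c, j, k, u, v, Matrix.cons_val, pow_zero, pow_one, one_mul,
    integral_const_mul, hf, hf', hf'']
  ring
end
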